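/- Correctness of the largest-divisible-subset recurrence: let A be a strictly increasing finite sequence of positive integers of length n. Call S ⊆ {1,...,n} divisible if for all indices x,y ∈ S, A[x] divides A[y] or A[y] divides A[x]. Define L(i) as the maximum cardinality of a divisible subset whose maximum index is i. Then L(i) = 1 if no j < i has A[j] dividing A[i], and otherwise L(i) = 1 + max{ L(j) : j < i and A[j] divides A[i] }. -/

import Mathlib

/-!
Because `A` is strictly increasing with positive values, `A y ∣ A x` is impossible for
`x < y`, so in a divisible set every value divides the value at the maximum index. Hence
appending `i` to a divisible set ending at `j < i` with `A j ∣ A i` keeps it divisible, and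
conversely removing the maximum `i` from a divisible set of size at least two leaves a divisible
set ending at some `k < i` with `A k ∣ A i`. Both directions of the recurrence follow.
-/

open Finset

def divisibleSizes (n : ℕ) (A : ℕ → ℕ) (i : ℕ) : Set ℕ :=
  {m : ℕ | ∃ S : Finset ℕ, S ⊆ Finset.Icc 1 n ∧ i ∈ S ∧ (∀ x ∈ S, x ≤ i) ∧
    (∀ x ∈ S, ∀ y ∈ S, A x ∣ A y ∨ A y ∣ A x) ∧ m = S.card}

theorem StrictMonoOn.dvd_of_dvd_or_dvd {α : Type*} [Preorder α] {A : α → ℕ} {s : Set α}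
    (hA : StrictMonoOn A s) {x y : α} (hx : x ∈ s) (hy : y ∈ s) (hx0 : 0 < A x)
    (hxy : x < y) (h : A x ∣ A y ∨ A y ∣ A x) : A x ∣ A y :=
  h.resolve_right fun hyx => (hA hx hy hxy).not_ge (Nat.le_of_dvd hx0 hyx)

section DivisibleSizes

variable {n : ℕ} {A : ℕ → ℕ}

theorem dvd_of_mem_of_forall_le (hmono : StrictMonoOn A (Set.Icc 1 n))
    (hpos : ∀ i ∈ Set.Icc 1 n, 0 < A i) {S : Finset ℕ} {j x : ℕ} (hS : S ⊆ Finset.Icc 1 n)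
    (hj : j ∈ S) (hmax : ∀ y ∈ S, y ≤ j) (hcomp : ∀ x ∈ S, ∀ y ∈ S, A x ∣ A y ∨ A y ∣ A x)
    (hx : x ∈ S) : A x ∣ A j := by
  have hxI : x ∈ Set.Icc 1 n := by simpa using hS hx
  have hjI : j ∈ Set.Icc 1 n := by simpa using hS hj
  rcases (hmax x hx).eq_or_lt with rfl | hlt
  · exact dvd_rfl
  · exact hmono.dvd_of_dvd_or_dvd hxI hjI (hpos x hxI) hlt (hcomp x hx j hj)

theorem le_of_mem_divisibleSizes {i m : ℕ} (hm : m ∈ divisibleSizes n A i) : m ≤ n := by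
  obtain ⟨S, hS, -, -, -, rfl⟩ := hm
  simpa using card_le_card hS

theorem bddAbove_divisibleSizes (i : ℕ) : BddAbove (divisibleSizes n A i) :=
  ⟨n, fun _ => le_of_mem_divisibleSizes⟩

theorem one_mem_divisibleSizes {i : ℕ} (hi : i ∈ Set.Icc 1 n) : 1 ∈ divisibleSizes n A i :=
  ⟨{i}, by simpa using hi, mem_singleton_self i, by simp, by simp, (card_singleton i).symm⟩

theorem succ_mem_divisibleSizes (hmono : StrictMonoOn A (Set.Icc 1 n))
    (hpos : ∀ i ∈ Set.Icc 1 n, 0 < A i) {i j m : ℕ} (hi : i ∈ Set.Icc 1 n) (hji : j < i)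
    (hdvd : A j ∣ A i) (hm : m ∈ divisibleSizes n A j) : m + 1 ∈ divisibleSizes n A i := by
  obtain ⟨S, hS, hjS, hmax, hcomp, rfl⟩ := hm
  have hiS : i ∉ S := fun h => (hmax i h).not_gt hji
  have hdvd_i : ∀ x ∈ S, A x ∣ A i := fun x hx =>
    (dvd_of_mem_of_forall_le hmono hpos hS hjS hmax hcomp hx).trans hdvd
  refine ⟨insert i S, insert_subset (by simpa using hi) hS, mem_insert_self i S, ?_, ?_,
    (card_insert_of_notMem hiS).symm⟩
  · simp only [mem_insert, forall_eq_or_imp, le_refl, true_and]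
    exact fun x hx => (hmax x hx).trans hji.le
  · simp only [mem_insert, forall_eq_or_imp, dvd_refl, true_or, true_and]
    exact ⟨fun y hy => Or.inr (hdvd_i y hy),
      fun x hx => ⟨Or.inl (hdvd_i x hx), fun y hy => hcomp x hx y hy⟩⟩

theorem eq_one_or_exists_of_mem_divisibleSizes (hmono : StrictMonoOn A (Set.Icc 1 n))
    (hpos : ∀ i ∈ Set.Icc 1 n, 0 < A i) {i m : ℕ} (hm : m ∈ divisibleSizes n A i) :
    m = 1 ∨ ∃ k m', 1 ≤ k ∧ k < i ∧ A k ∣ A i ∧ m' ∈ divisibleSizes n A k ∧ m = m' + 1 := by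
  obtain ⟨S, hS, hiS, hmax, hcomp, rfl⟩ := hm
  have hcard : S.card = (S.erase i).card + 1 := (card_erase_add_one hiS).symm
  rcases (S.erase i).eq_empty_or_nonempty with hempty | hne
  · left
    rw [hcard, hempty, card_empty]
  · right
    set k := (S.erase i).max' hne
    have hk : k ∈ S.erase i := max'_mem _ hne
    have hkS : k ∈ S := mem_of_mem_erase hk
    have hki : k < i := (hmax k hkS).lt_of_ne (ne_of_mem_erase hk)
    refine ⟨k, _, (mem_Icc.mp (hS hkS)).1, hki,
      dvd_of_mem_of_forall_le hmono hpos hS hiS hmax hcomp hkS, ?_, hcard⟩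
    exact ⟨S.erase i, (erase_subset i S).trans hS, hk, fun x hx => le_max' _ x hx,
      fun x hx y hy => hcomp x (mem_of_mem_erase hx) y (mem_of_mem_erase hy), rfl⟩

end DivisibleSizes

/-- Correctness of the largest-divisible-subset recurrence.  Let `A` be strictly
increasing on `{1,…,n}` with positive values.  A set `S ⊆ {1,…,n}` of indices is
divisible if every pair of its values is comparable under divisibility.  With
`L i` the maximum cardinality of a divisible subset whose maximum index is `i`:
`L i = 1` if no `j < i` has `A j ∣ A i`, and otherwise
`L i = 1 + max { L j : j < i, A j ∣ A i }`. -/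
theorem largest_divisible_subset_recurrence
    (n : ℕ) (A : ℕ → ℕ)
    (hmono : StrictMonoOn A (Set.Icc 1 n)) (hpos : ∀ i ∈ Set.Icc 1 n, 0 < A i)
    (L : ℕ → ℕ)
    (hL : ∀ i ∈ Set.Icc 1 n, L i = sSup {m : ℕ | ∃ S : Finset ℕ,
      S ⊆ Finset.Icc 1 n ∧ i ∈ S ∧ (∀ x ∈ S, x ≤ i) ∧
      (∀ x ∈ S, ∀ y ∈ S, A x ∣ A y ∨ A y ∣ A x) ∧ m = S.card}) :
    ∀ i ∈ Set.Icc 1 n,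
      ((¬ ∃ j, 1 ≤ j ∧ j < i ∧ A j ∣ A i) → L i = 1) ∧
      ((∃ j, 1 ≤ j ∧ j < i ∧ A j ∣ A i) →
        L i = 1 + sSup {m : ℕ | ∃ j, 1 ≤ j ∧ j < i ∧ A j ∣ A i ∧ m = L j}) := by
  have hL_mem : ∀ k ∈ Set.Icc 1 n, L k ∈ divisibleSizes n A k := fun k hk =>
    hL k hk ▸ Nat.sSup_mem ⟨1, one_mem_divisibleSizes hk⟩ (bddAbove_divisibleSizes k)
  have le_L : ∀ k ∈ Set.Icc 1 n, ∀ m ∈ divisibleSizes n A k, m ≤ L k := fun k hk m hm =>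
    hL k hk ▸ le_csSup (bddAbove_divisibleSizes k) hm
  intro i hi
  have hkI : ∀ k < i, 1 ≤ k → k ∈ Set.Icc 1 n := fun k hki hk => ⟨hk, hki.le.trans hi.2⟩
  have hcases := eq_one_or_exists_of_mem_divisibleSizes hmono hpos (hL_mem i hi)
  refine ⟨fun hno => hcases.resolve_right fun ⟨k, _, hk, hki, hdvd, _⟩ => hno ⟨k, hk, hki, hdvd⟩,
    fun ⟨j₀, hj₀, hj₀i, hdvd₀⟩ => ?_⟩
  set T := {m : ℕ | ∃ j, 1 ≤ j ∧ j < i ∧ A j ∣ A i ∧ m = L j}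
  have hT : BddAbove T := ⟨n, by
    rintro _ ⟨j, hj, hji, -, rfl⟩
    exact le_of_mem_divisibleSizes (hL_mem j (hkI j hji hj))⟩
  obtain ⟨j, hj, hji, hdvd, hLj⟩ := Nat.sSup_mem (⟨L j₀, j₀, hj₀, hj₀i, hdvd₀, rfl⟩ : T.Nonempty) hT
  have lower : L j + 1 ≤ L i :=
    le_L i hi _ (succ_mem_divisibleSizes hmono hpos hi hji hdvd (hL_mem j (hkI j hji hj)))
  have upper : L i ≤ 1 + sSup T := by
    rcases hcases with hone | ⟨k, m', hk, hki, hdvd_k, hm', hLi⟩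
    · omega
    · have := (le_L k (hkI k hki hk) m' hm').trans (le_csSup hT ⟨k, hk, hki, hdvd_k, rfl⟩)
      omega
  omega
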